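/- arXiv:1010.4055 — 3 statements merged into one kernel-verified Lean document; each statement's English description precedes it below -/
import Mathlib

section
/- Let (R_n) be a sequence of real random variables on a probability space, uniformly bounded below by a constant -c. Then there exist forward convex combinations R¹_n ∈ conv(R_n, R_{n+1}, ...) and a random variable R_* with values in [-c, ∞] such that R¹_n → R_* almost surely. -/
/-!
Minimise the convex functional `V Y = 𝔼[exp (-Y)]` over the convex hulls
`C n = conv (R n, R (n + 1), …)`. Its infima increase in `n` to a limit, so there are indices
`M 0 < M 1 < ⋯` and almost minimisers `S k ∈ C (M k)`; as the midpoint of `S k` and `S (k + 1)`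
again lies in `C (M k)`, the convexity gap of `V` between them is at most `2 · 4⁻ᵏ`.
On `[-c, ∞)` the function `exp (-x)` takes values in `(0, exp c]` and is uniformly convex, so
these gaps bound `‖exp (-S k) - exp (-S (k + 1))‖₂ ≲ 2⁻ᵏ`. The norms are summable, hence
`exp (-S k)` converges almost surely, and so does `S k` in `[-c, ∞]`.
-/

open MeasureTheory Filter Topology Set Real

theorem exists_finsupp_of_mem_convexHull_image {ι E : Type*} [AddCommGroup E] [Module ℝ E]
    {f : ι → E} {s : Set ι} {x : E} (hx : x ∈ convexHull ℝ (f '' s)) :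
    ∃ w : ι →₀ ℝ, ↑w.support ⊆ s ∧ (∀ i, 0 ≤ w i) ∧ (w.sum fun _ a => a) = 1 ∧
      Finsupp.linearCombination ℝ f w = x := by
  classical
  suffices convexHull ℝ (f '' s) ⊆ {x | ∃ w : ι →₀ ℝ, ↑w.support ⊆ s ∧ (∀ i, 0 ≤ w i) ∧
      (w.sum fun _ a => a) = 1 ∧ Finsupp.linearCombination ℝ f w = x} from this hx
  refine convexHull_min ?_ ?_
  · rintro _ ⟨i, hi, rfl⟩
    refine ⟨Finsupp.single i 1, ?_, fun j => ?_, by simp, by simp⟩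
    · simpa using hi
    · by_cases h : i = j <;> simp [h]
  · rintro _ ⟨v, hvs, hv0, hv1, rfl⟩ _ ⟨w, hws, hw0, hw1, rfl⟩ a b ha hb hab
    refine ⟨a • v + b • w, ?_, fun i => ?_, ?_, by simp⟩
    · refine (Finset.coe_subset.2 Finsupp.support_add).trans ?_
      rw [Finset.coe_union]
      exact union_subset ((Finset.coe_subset.2 Finsupp.support_smul).trans hvs)
        ((Finset.coe_subset.2 Finsupp.support_smul).trans hws)
    · simp only [Finsupp.add_apply, Finsupp.smul_apply, smul_eq_mul]
      exact add_nonneg (mul_nonneg ha (hv0 i)) (mul_nonneg hb (hw0 i))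
    · rw [Finsupp.sum_add_index' (fun _ => rfl) (fun _ _ _ => rfl),
        Finsupp.sum_smul_index' (fun _ => rfl), Finsupp.sum_smul_index' (fun _ => rfl)]
      simp only [smul_eq_mul, ← Finsupp.mul_sum, hv1, hw1, mul_one, hab]

theorem exists_finset_of_mem_convexHull_image {ι α : Type*} {R : ι → α → ℝ} {s : Set ι}
    {Y : α → ℝ} (hY : Y ∈ convexHull ℝ (R '' s)) :
    ∃ (t : Finset ι) (lam : ι → ℝ), (∀ i ∈ t, i ∈ s) ∧ (∀ i, 0 ≤ lam i) ∧
      (∑ i ∈ t, lam i = 1) ∧ Y = fun a => ∑ i ∈ t, lam i * R i a := by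
  obtain ⟨w, hws, hw0, hw1, rfl⟩ := exists_finsupp_of_mem_convexHull_image hY
  refine ⟨w.support, w, fun i hi => hws hi, hw0, hw1, funext fun a => ?_⟩
  simp [Finsupp.linearCombination_apply, Finsupp.sum]

theorem exists_strictMono_midpoint_gap_le {E : Type*} [AddCommMonoid E] [SMul ℝ E]
    {C : ℕ → Set E} (hC : Antitone C) (hconv : ∀ n, Convex ℝ (C n)) (hne : ∀ n, (C n).Nonempty)
    {V : E → ℝ} (hV : BddBelow (V '' C 0)) (hV' : BddAbove (V '' C 0))
    {ε : ℕ → ℝ} (hε : ∀ k, 0 < ε k) (hε' : Antitone ε) :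
    ∃ M : ℕ → ℕ, StrictMono M ∧ ∃ S : ℕ → E, (∀ k, S k ∈ C (M k)) ∧
      ∀ k, (V (S k) + V (S (k + 1))) / 2 - V ((1 / 2 : ℝ) • S k + (1 / 2 : ℝ) • S (k + 1))
        ≤ 2 * ε k := by
  set v : ℕ → ℝ := fun n => sInf (V '' C n)
  have hbdd n : BddBelow (V '' C n) := hV.mono (image_mono (hC (Nat.zero_le n)))
  have hv_le {n Y} (hY : Y ∈ C n) : v n ≤ V Y := csInf_le (hbdd n) (mem_image_of_mem V hY)
  have hv_mono : Monotone v := fun m n hmn =>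
    csInf_le_csInf (hbdd m) ((hne n).image V) (image_mono (hC hmn))
  have hv_bdd : BddAbove (range v) := by
    obtain ⟨B, hB⟩ := hV'
    refine ⟨B, forall_mem_range.2 fun n => ?_⟩
    obtain ⟨Y, hY⟩ := hne n
    exact (hv_le hY).trans (hB (mem_image_of_mem V (hC (Nat.zero_le n) hY)))
  obtain ⟨M, hM, hMv⟩ : ∃ M : ℕ → ℕ, StrictMono M ∧ ∀ k, (⨆ n, v n) - ε k < v (M k) :=
    extraction_forall_of_eventually fun k =>
      (tendsto_atTop_ciSup hv_mono hv_bdd).eventually (lt_mem_nhds (sub_lt_self _ (hε k)))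
  have hS k : ∃ Y ∈ C (M k), V Y < v (M k) + ε k := by
    obtain ⟨_, ⟨Y, hY, rfl⟩, hYv⟩ :=
      exists_lt_of_csInf_lt ((hne (M k)).image V) (lt_add_of_pos_right _ (hε k))
    exact ⟨Y, hY, hYv⟩
  choose S hSC hSV using hS
  refine ⟨M, hM, S, hSC, fun k => ?_⟩
  have hT := hv_le <| hconv (M k) (hSC k) (hC (hM.monotone k.le_succ) (hSC (k + 1)))
    (by norm_num : (0 : ℝ) ≤ 1 / 2) (by norm_num : (0 : ℝ) ≤ 1 / 2) (by norm_num)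
  have := le_ciSup hv_bdd (M k)
  have := le_ciSup hv_bdd (M (k + 1))
  linarith [hSV k, hSV (k + 1), hMv k, hε' k.le_succ]

theorem sq_exp_neg_sub_exp_neg_le {a b c : ℝ} (ha : -c ≤ a) (hb : -c ≤ b) :
    (exp (-a) - exp (-b)) ^ 2 ≤
      8 * exp c * ((exp (-a) + exp (-b)) / 2 - exp (-(1 / 2 * a + 1 / 2 * b))) := by
  set p := exp (-a / 2)
  set q := exp (-b / 2)
  have hp : exp (-a) = p ^ 2 := by rw [← exp_nat_mul]; ring_nf
  have hq : exp (-b) = q ^ 2 := by rw [← exp_nat_mul]; ring_nf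
  have hpq : exp (-(1 / 2 * a + 1 / 2 * b)) = p * q := by rw [← exp_add]; ring_nf
  have hpc : p ^ 2 ≤ exp c := hp ▸ exp_le_exp.2 (by linarith)
  have hqc : q ^ 2 ≤ exp c := hq ▸ exp_le_exp.2 (by linarith)
  rw [hp, hq, hpq]
  -- `(p² - q²)² = (p - q)² (p + q)²` and `(p + q)² ≤ 2 (p² + q²) ≤ 4 exp c`
  nlinarith [sq_nonneg (p - q), sq_nonneg (p + q),
    mul_nonneg (sq_nonneg (p - q)) (sq_nonneg (p - q))]

theorem tendsto_coe_of_tendsto_exp_neg {α : Type*} {l : Filter α} {x : α → ℝ} {ℓ : ℝ}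
    (h : Tendsto (fun i => exp (-x i)) l (𝓝 ℓ)) :
    Tendsto (fun i => (x i : EReal)) l (𝓝 (-ENNReal.log (ENNReal.ofReal ℓ))) := by
  refine (((ENNReal.continuous_log.tendsto _).comp
    ((ENNReal.continuous_ofReal.tendsto ℓ).comp h)).neg).congr fun i => ?_
  simp [ENNReal.log_ofReal_of_pos (exp_pos _)]

theorem MeasureTheory.MemLp.eLpNorm_two_eq_ofReal_sqrt_integral_sq {α : Type*}
    [MeasurableSpace α] {μ : Measure α} {f : α → ℝ} (hf : MemLp f 2 μ) :
    eLpNorm f 2 μ = ENNReal.ofReal √(∫ a, f a ^ 2 ∂μ) := by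
  rw [hf.eLpNorm_eq_integral_rpow_norm two_ne_zero ENNReal.ofNat_ne_top, sqrt_eq_rpow]
  simp [norm_eq_abs]

theorem ae_cauchySeq_of_summable_sqrt_integral_sq_sub {α : Type*} [MeasurableSpace α]
    {μ : Measure α} {f : ℕ → α → ℝ} (hf : ∀ k, MemLp (f k) 2 μ)
    (h : Summable fun k => √(∫ a, (f k a - f (k + 1) a) ^ 2 ∂μ)) :
    ∀ᵐ a ∂μ, CauchySeq fun k => f k a := by
  have hsum : ∑' k, eLpNorm (f k - f (k + 1)) 2 μ ≠ ⊤ := by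
    simp_rw [((hf _).sub (hf _)).eLpNorm_two_eq_ofReal_sqrt_integral_sq, Pi.sub_apply,
      ← ENNReal.ofReal_tsum_of_nonneg (fun _ => sqrt_nonneg _) h]
    exact ENNReal.ofReal_ne_top
  filter_upwards [summable_norm_of_tsum_eLpNorm_ne_top one_le_two
    (fun k => ((hf k).sub (hf (k + 1))).aestronglyMeasurable) hsum] with a ha
  exact cauchySeq_of_summable_dist
    (ha.congr fun k => by rw [Real.dist_eq, Pi.sub_apply, norm_eq_abs])

section

variable {Ω : Type*} [MeasurableSpace Ω] {c : ℝ}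

theorem convexHull_image_subset_measurable_ge {ι : Type*} {R : ι → Ω → ℝ}
    (hmeas : ∀ i, Measurable (R i)) (hbdd : ∀ i ω, -c ≤ R i ω) (s : Set ι) :
    convexHull ℝ (R '' s) ⊆ {Y | Measurable Y ∧ ∀ ω, -c ≤ Y ω} := by
  refine convexHull_min (image_subset_iff.2 fun i _ => ⟨hmeas i, hbdd i⟩) ?_
  rintro Y ⟨hYm, hY⟩ Z ⟨hZm, hZ⟩ a b ha hb hab
  refine ⟨(hYm.const_smul a).add (hZm.const_smul b), fun ω => ?_⟩
  calc -c = a * -c + b * -c := by rw [← add_mul, hab, one_mul]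
    _ ≤ a * Y ω + b * Z ω := by gcongr <;> simp_all
    _ = (a • Y + b • Z) ω := rfl

variable {P : Measure Ω} [IsFiniteMeasure P] {Y Z : Ω → ℝ}

theorem memLp_exp_neg (p : ENNReal) (hYm : Measurable Y) (hY : ∀ ω, -c ≤ Y ω) :
    MemLp (fun ω => exp (-Y ω)) p P :=
  .of_bound (by fun_prop) (exp c) <| ae_of_all _ fun ω => by
    rw [norm_of_nonneg (exp_nonneg _)]
    exact exp_le_exp.2 (by linarith [hY ω])

theorem integral_sq_exp_neg_sub_exp_neg_le (hYm : Measurable Y) (hY : ∀ ω, -c ≤ Y ω)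
    (hZm : Measurable Z) (hZ : ∀ ω, -c ≤ Z ω) :
    ∫ ω, (exp (-Y ω) - exp (-Z ω)) ^ 2 ∂P ≤
      8 * exp c * ((∫ ω, exp (-Y ω) ∂P + ∫ ω, exp (-Z ω) ∂P) / 2 -
        ∫ ω, exp (-((1 / 2 : ℝ) • Y + (1 / 2 : ℝ) • Z) ω) ∂P) := by
  have hYi := memLp_one_iff_integrable.1 (memLp_exp_neg (P := P) 1 hYm hY)
  have hZi := memLp_one_iff_integrable.1 (memLp_exp_neg (P := P) 1 hZm hZ)
  have hTi := memLp_one_iff_integrable.1 <| memLp_exp_neg (P := P) (c := c) 1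
    ((hYm.const_smul (1 / 2 : ℝ)).add (hZm.const_smul (1 / 2 : ℝ))) fun ω => by
      simp only [Pi.add_apply, Pi.smul_apply, smul_eq_mul]; linarith [hY ω, hZ ω]
  have hAi : Integrable (fun ω => (exp (-Y ω) + exp (-Z ω)) / 2) P := (hYi.add hZi).div_const 2
  rw [← integral_add hYi hZi, ← integral_div, ← integral_sub hAi hTi, ← integral_const_mul]
  refine integral_mono_of_nonneg (ae_of_all _ fun ω => sq_nonneg _)
    ((hAi.sub hTi).const_mul _) (ae_of_all _ fun ω => ?_)
  exact sq_exp_neg_sub_exp_neg_le (hY ω) (hZ ω)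

theorem integral_exp_neg_le (hYm : Measurable Y) (hY : ∀ ω, -c ≤ Y ω) :
    ∫ ω, exp (-Y ω) ∂P ≤ P.real univ * exp c :=
  (integral_mono (memLp_one_iff_integrable.1 (memLp_exp_neg 1 hYm hY)) (integrable_const _)
    fun ω => exp_le_exp.2 (by linarith [hY ω])).trans_eq (by rw [integral_const, smul_eq_mul])

theorem ae_cauchySeq_exp_neg_of_midpoint_gap_le {S : ℕ → Ω → ℝ}
    (hS : ∀ k, Measurable (S k) ∧ ∀ ω, -c ≤ S k ω)
    (hgap : ∀ k, (∫ ω, exp (-S k ω) ∂P + ∫ ω, exp (-S (k + 1) ω) ∂P) / 2 -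
      ∫ ω, exp (-((1 / 2 : ℝ) • S k + (1 / 2 : ℝ) • S (k + 1)) ω) ∂P ≤ 2 * (1 / 4 : ℝ) ^ k) :
    ∀ᵐ ω ∂P, CauchySeq fun k => exp (-S k ω) := by
  have hL2 k : √(∫ ω, (exp (-S k ω) - exp (-S (k + 1) ω)) ^ 2 ∂P)
      ≤ 4 * √(exp c) * (1 / 2 : ℝ) ^ k := by
    refine sqrt_le_iff.2 ⟨by positivity, ?_⟩
    calc _ ≤ 8 * exp c * (2 * (1 / 4 : ℝ) ^ k) :=
          (integral_sq_exp_neg_sub_exp_neg_le (hS k).1 (hS k).2 (hS (k + 1)).1 (hS (k + 1)).2).trans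
            (mul_le_mul_of_nonneg_left (hgap k) (by positivity))
      _ = (4 * √(exp c) * (1 / 2 : ℝ) ^ k) ^ 2 := by
          rw [mul_pow, mul_pow, sq_sqrt (exp_pos c).le, ← pow_mul, mul_comm k 2, pow_mul]
          norm_num
          ring
  exact ae_cauchySeq_of_summable_sqrt_integral_sq_sub
    (fun k => memLp_exp_neg 2 (hS k).1 (hS k).2)
    (Summable.of_nonneg_of_le (fun k => sqrt_nonneg _) hL2
      ((summable_geometric_of_lt_one (by norm_num) (by norm_num)).mul_left _))

end

/-- Komlós-type lemma of Delbaen–Schachermayer (Lemma A1.1).  Let `(R_n)` be a sequence of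
real random variables uniformly bounded below by `-c`.  Then there are forward convex
combinations `R¹_n ∈ conv(R_n, R_{n+1}, …)` and a random variable `R_*` with values in
`[-c, ∞]` such that `R¹_n → R_*` almost surely. -/
theorem forward_convex_combinations_converge
    {Ω : Type*} [MeasurableSpace Ω] (P : Measure Ω) [IsProbabilityMeasure P]
    (R : ℕ → Ω → ℝ) (hmeas : ∀ n, Measurable (R n))
    (c : ℝ) (hbdd : ∀ n, ∀ ω, -c ≤ R n ω) :
    ∃ (R1 : ℕ → Ω → ℝ) (Rstar : Ω → EReal),
      (∀ n : ℕ, ∃ (s : Finset ℕ) (lam : ℕ → ℝ),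
        (∀ m ∈ s, n ≤ m) ∧ (∀ m, 0 ≤ lam m) ∧ (∑ m ∈ s, lam m = 1) ∧
        R1 n = fun ω => ∑ m ∈ s, lam m * R m ω) ∧
      (∀ ω, ((-c : ℝ) : EReal) ≤ Rstar ω) ∧
      (∀ᵐ ω ∂P, Filter.Tendsto (fun n => ((R1 n ω : ℝ) : EReal))
        Filter.atTop (nhds (Rstar ω))) := by
  set C : ℕ → Set (Ω → ℝ) := fun n => convexHull ℝ (R '' Ici n)
  have hC n : C n ⊆ {Y | Measurable Y ∧ ∀ ω, -c ≤ Y ω} :=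
    convexHull_image_subset_measurable_ge hmeas hbdd _
  obtain ⟨M, hM, S, hSC, hgap⟩ := exists_strictMono_midpoint_gap_le (C := C)
    (V := fun Y => ∫ ω, exp (-Y ω) ∂P) (ε := fun k => (1 / 4 : ℝ) ^ k)
    (fun m n hmn => convexHull_mono (image_mono (Ici_subset_Ici.2 hmn)))
    (fun n => convex_convexHull ℝ _)
    (fun n => ⟨R n, subset_convexHull ℝ _ (mem_image_of_mem R self_mem_Ici)⟩)
    ⟨0, forall_mem_image.2 fun Y _ => integral_nonneg fun ω => (exp_pos _).le⟩
    ⟨P.real univ * exp c, forall_mem_image.2 fun Y hY => integral_exp_neg_le (hC 0 hY).1 (hC 0 hY).2⟩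
    (fun k => by positivity) (fun m n hmn => pow_le_pow_of_le_one (by norm_num) (by norm_num) hmn)
  have hS k : Measurable (S k) ∧ ∀ ω, -c ≤ S k ω := hC _ (hSC k)
  refine ⟨S, fun ω => limsup (fun k => (S k ω : EReal)) atTop, fun n => ?_, fun ω => ?_, ?_⟩
  · exact exists_finset_of_mem_convexHull_image
      (convexHull_mono (image_mono (Ici_subset_Ici.2 (hM.id_le n))) (hSC n))
  · exact le_limsup_of_frequently_le
      (Frequently.of_forall fun k => EReal.coe_le_coe_iff.2 ((hS k).2 ω))
  · filter_upwards [ae_cauchySeq_exp_neg_of_midpoint_gap_le hS hgap] with ω hω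
    obtain ⟨ℓ, hℓ⟩ := cauchySeq_tendsto_of_complete hω
    have hlim := tendsto_coe_of_tendsto_exp_neg hℓ
    rwa [hlim.limsup_eq]
end

section
/- Let U: ℝ → ℝ ∪ {-∞} be increasing and concave, finite exactly on a set containing (0,∞) and equal to -∞ on (-∞,0). Let B be a random variable with |B| ≤ b a.s., and fix x > x₁ and a random variable R^B with x₁ + R^B ≥ B a.s. and |R^B| ≤ m₀ a.s. Then the functional I(G) := E[U(x + G - B)] on L^∞(P) is finite at R^B and continuous at R^B in the L^∞ norm topology. -/
/-!
On `(0, ∞)` the utility `U` is finite and concave, hence continuous, and by monotonicity it is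
bounded on every compact interval `[s, t] ⊂ (0, ∞)`. Almost surely `x + R^B - B` lies in
`[x - x₁, x + m₀ + b]`, and once `‖G_n - R^B‖_∞ ≤ ε₀ < x - x₁` the argument `x + G_n - B` lies in
`[x - x₁ - ε₀, x + m₀ + b + ε₀]`. So all the expectations involved are integrals of uniformly
bounded real functions, and dominated convergence gives continuity.
-/

open MeasureTheory Filter Topology Set

/-- Positive part of an extended real, as an extended nonnegative real. -/
noncomputable def EReal.posPart' (a : EReal) : ENNReal :=
  if a = ⊤ then ⊤ else ENNReal.ofReal a.toReal

/-- Expectation of an `ℝ ∪ {±∞}`-valued random variable, as difference of the lower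
integrals of its positive and negative parts. -/
noncomputable def eExp {Ω : Type*} [MeasurableSpace Ω] (P : Measure Ω) (g : Ω → EReal) : EReal :=
  ((∫⁻ ω, (g ω).posPart' ∂P : ENNReal) : EReal) - ((∫⁻ ω, (-(g ω)).posPart' ∂P : ENNReal) : EReal)

lemma EReal.posPart'_coe (r : ℝ) : (r : EReal).posPart' = ENNReal.ofReal r := by
  simp [EReal.posPart']

lemma concaveOn_toReal_Ioi {U : ℝ → EReal}
    (hconc : ∀ a b t : ℝ, 0 ≤ t → t ≤ 1 →
      (t : EReal) * U a + ((1 - t : ℝ) : EReal) * U b ≤ U (t * a + (1 - t) * b))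
    (hfin : ∀ z : ℝ, 0 < z → U z ≠ ⊥) (hTop : ∀ z : ℝ, U z ≠ ⊤) :
    ConcaveOn ℝ (Ioi 0) fun z => (U z).toReal := by
  have hcoe : ∀ z : ℝ, 0 < z → U z = ((U z).toReal : EReal) := fun z hz =>
    (EReal.coe_toReal (hTop z) (hfin z hz)).symm
  refine ⟨convex_Ioi 0, fun p hp q hq s t hs ht hst => ?_⟩
  have hmem : s * p + t * q ∈ Ioi (0 : ℝ) := convex_Ioi 0 hp hq hs ht hst
  obtain rfl : t = 1 - s := by linarith
  have key := hconc p q s hs (by linarith)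
  rw [hcoe p hp, hcoe q hq, hcoe _ hmem] at key
  exact_mod_cast key

lemma abs_toReal_le_of_mem_Icc {U : ℝ → EReal} (hmono : Monotone U)
    (hfin : ∀ z : ℝ, 0 < z → U z ≠ ⊥) (hTop : ∀ z : ℝ, U z ≠ ⊤) {s t z : ℝ} (hs : 0 < s)
    (hz : z ∈ Icc s t) : |(U z).toReal| ≤ max |(U s).toReal| |(U t).toReal| :=
  abs_le_max_abs_abs (EReal.toReal_le_toReal (hmono hz.1) (hfin s hs) (hTop z))
    (EReal.toReal_le_toReal (hmono hz.2) (hfin z (hs.trans_le hz.1)) (hTop t))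

section eExp

variable {Ω : Type*} [MeasurableSpace Ω] {P : Measure Ω}

lemma eExp_of_ae_eq_coe {g : Ω → EReal} {f : Ω → ℝ} (hf : Integrable f P)
    (hgf : ∀ᵐ ω ∂P, g ω = f ω) : eExp P g = ((∫ ω, f ω ∂P : ℝ) : EReal) := by
  have hpos : ∫⁻ ω, (g ω).posPart' ∂P = ∫⁻ ω, ENNReal.ofReal (f ω) ∂P :=
    lintegral_congr_ae (hgf.mono fun ω h => by dsimp only; rw [h, EReal.posPart'_coe])
  have hneg : ∫⁻ ω, (-g ω).posPart' ∂P = ∫⁻ ω, ENNReal.ofReal (-f ω) ∂P :=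
    lintegral_congr_ae (hgf.mono fun ω h => by dsimp only; rw [h, ← EReal.coe_neg, EReal.posPart'_coe])
  have hpos_fin := ne_top_of_le_ne_top hf.2.ne (lintegral_ofReal_le_lintegral_enorm f)
  have hneg_fin := ne_top_of_le_ne_top hf.neg.2.ne
    (lintegral_ofReal_le_lintegral_enorm fun ω => -f ω)
  rw [eExp, hpos, hneg, integral_eq_lintegral_pos_part_sub_lintegral_neg_part hf, EReal.coe_sub,
    EReal.coe_ennreal_toReal hpos_fin, EReal.coe_ennreal_toReal hneg_fin]

lemma ae_add_sub_mem_Icc {B RB G : Ω → ℝ} {b x₁ x m₀ ε : ℝ}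
    (hB : ∀ᵐ ω ∂P, |B ω| ≤ b) (hsuper : ∀ᵐ ω ∂P, B ω ≤ x₁ + RB ω)
    (hRBbdd : ∀ᵐ ω ∂P, |RB ω| ≤ m₀) (hG : ∀ᵐ ω ∂P, |G ω - RB ω| ≤ ε) :
    ∀ᵐ ω ∂P, x + G ω - B ω ∈ Icc (x - x₁ - ε) (x + m₀ + b + ε) := by
  filter_upwards [hB, hsuper, hRBbdd, hG] with ω hB hsuper hRB hG
  rw [abs_le] at hB hRB hG
  constructor <;> linarith

variable [IsFiniteMeasure P] {U : ℝ → EReal}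

lemma integrable_toReal_comp_of_ae_mem_Icc (hmono : Monotone U)
    (hfin : ∀ z : ℝ, 0 < z → U z ≠ ⊥) (hTop : ∀ z : ℝ, U z ≠ ⊤) {g : Ω → ℝ}
    (hg : AEMeasurable g P) {s t : ℝ} (hs : 0 < s) (hgst : ∀ᵐ ω ∂P, g ω ∈ Icc s t) :
    Integrable (fun ω => (U (g ω)).toReal) P :=
  (integrable_const (max |(U s).toReal| |(U t).toReal|)).mono'
    (hmono.measurable.comp_aemeasurable hg).ereal_toReal.aestronglyMeasurable
    (hgst.mono fun _ h => abs_toReal_le_of_mem_Icc hmono hfin hTop hs h)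

lemma eExp_comp_of_ae_mem_Icc (hmono : Monotone U)
    (hfin : ∀ z : ℝ, 0 < z → U z ≠ ⊥) (hTop : ∀ z : ℝ, U z ≠ ⊤) {g : Ω → ℝ}
    (hg : AEMeasurable g P) {s t : ℝ} (hs : 0 < s) (hgst : ∀ᵐ ω ∂P, g ω ∈ Icc s t) :
    eExp P (fun ω => U (g ω)) = ((∫ ω, (U (g ω)).toReal ∂P : ℝ) : EReal) :=
  eExp_of_ae_eq_coe (integrable_toReal_comp_of_ae_mem_Icc hmono hfin hTop hg hs hgst)
    (hgst.mono fun _ h => (EReal.coe_toReal (hTop _) (hfin _ (hs.trans_le h.1))).symm)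

lemma tendsto_eExp_comp_of_ae_tendsto (hmono : Monotone U)
    (hfin : ∀ z : ℝ, 0 < z → U z ≠ ⊥) (hTop : ∀ z : ℝ, U z ≠ ⊤)
    (hcont : ContinuousOn (fun z => (U z).toReal) (Ioi 0))
    {g : ℕ → Ω → ℝ} {g₀ : Ω → ℝ} (hg : ∀ n, AEMeasurable (g n) P) (hg₀ : AEMeasurable g₀ P)
    {s t : ℝ} (hs : 0 < s) (hgst : ∀ᶠ n in atTop, ∀ᵐ ω ∂P, g n ω ∈ Icc s t)
    (hg₀st : ∀ᵐ ω ∂P, g₀ ω ∈ Icc s t)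
    (hlim : ∀ᵐ ω ∂P, Tendsto (fun n => g n ω) atTop (𝓝 (g₀ ω))) :
    Tendsto (fun n => eExp P fun ω => U (g n ω)) atTop (𝓝 (eExp P fun ω => U (g₀ ω))) := by
  have hint : Tendsto (fun n => ∫ ω, (U (g n ω)).toReal ∂P) atTop
      (𝓝 (∫ ω, (U (g₀ ω)).toReal ∂P)) := by
    refine tendsto_integral_filter_of_dominated_convergence
      (fun _ => max |(U s).toReal| |(U t).toReal|)
      (Eventually.of_forall fun n =>
        (hmono.measurable.comp_aemeasurable (hg n)).ereal_toReal.aestronglyMeasurable)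
      ?_ (integrable_const _) ?_
    · filter_upwards [hgst] with n hn
      filter_upwards [hn] with ω h using abs_toReal_le_of_mem_Icc hmono hfin hTop hs h
    · filter_upwards [hlim, hg₀st] with ω hω h₀
      exact (hcont.continuousAt (Ioi_mem_nhds (hs.trans_le h₀.1))).tendsto.comp hω
  rw [eExp_comp_of_ae_mem_Icc hmono hfin hTop hg₀ hs hg₀st]
  refine ((continuous_coe_real_ereal.tendsto _).comp hint).congr' ?_
  filter_upwards [hgst] with n hn
  exact (eExp_comp_of_ae_mem_Icc hmono hfin hTop (hg n) hs hn).symm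

end eExp

theorem utility_functional_finite_and_continuous_general
    {Ω : Type*} [MeasurableSpace Ω] (P : Measure Ω) [IsProbabilityMeasure P]
    (U : ℝ → EReal) (hmono : Monotone U)
    (hconc : ∀ a b t : ℝ, 0 ≤ t → t ≤ 1 →
      (t : EReal) * U a + ((1 - t : ℝ) : EReal) * U b ≤ U (t * a + (1 - t) * b))
    (hfin : ∀ z : ℝ, 0 < z → U z ≠ ⊥) (hTop : ∀ z : ℝ, U z ≠ ⊤)
    (B : Ω → ℝ) (hBmeas : Measurable B) (b : ℝ) (hB : ∀ᵐ ω ∂P, |B ω| ≤ b)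
    (x₁ x : ℝ) (hx : x₁ < x)
    (RB : Ω → ℝ) (hRBmeas : Measurable RB)
    (hsuper : ∀ᵐ ω ∂P, B ω ≤ x₁ + RB ω)
    (m₀ : ℝ) (hRBbdd : ∀ᵐ ω ∂P, |RB ω| ≤ m₀) :
    (eExp P (fun ω => U (x + RB ω - B ω)) ≠ ⊥ ∧
     eExp P (fun ω => U (x + RB ω - B ω)) ≠ ⊤) ∧
    (∀ (G : ℕ → Ω → ℝ) (c : ℕ → ℝ), (∀ n, Measurable (G n)) →
      (∀ n, ∀ᵐ ω ∂P, |G n ω - RB ω| ≤ c n) →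
      Filter.Tendsto c Filter.atTop (nhds 0) →
      Filter.Tendsto (fun n => eExp P (fun ω => U (x + G n ω - B ω)))
        Filter.atTop (nhds (eExp P (fun ω => U (x + RB ω - B ω))))) := by
  have hcont : ContinuousOn (fun z => (U z).toReal) (Ioi 0) :=
    (concaveOn_toReal_Ioi hconc hfin hTop).continuousOn isOpen_Ioi
  obtain ⟨ε₀, hε₀, hs⟩ : ∃ ε₀ : ℝ, 0 < ε₀ ∧ 0 < x - x₁ - ε₀ :=
    ⟨(x - x₁) / 2, by linarith, by linarith⟩
  have hmeas {G : Ω → ℝ} (hG : Measurable G) : AEMeasurable (fun ω => x + G ω - B ω) P :=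
    ((measurable_const.add hG).sub hBmeas).aemeasurable
  have hRB : ∀ᵐ ω ∂P, x + RB ω - B ω ∈ Icc (x - x₁ - ε₀) (x + m₀ + b + ε₀) :=
    ae_add_sub_mem_Icc hB hsuper hRBbdd (ae_of_all _ fun ω => by simpa using hε₀.le)
  refine ⟨?_, fun G c hGmeas hGc hc => ?_⟩
  · rw [eExp_comp_of_ae_mem_Icc hmono hfin hTop (hmeas hRBmeas) hs hRB]
    exact ⟨EReal.coe_ne_bot _, EReal.coe_ne_top _⟩
  refine tendsto_eExp_comp_of_ae_tendsto hmono hfin hTop hcont (fun n => hmeas (hGmeas n))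
    (hmeas hRBmeas) hs ?_ hRB ?_
  · filter_upwards [hc.eventually (ge_mem_nhds hε₀)] with n hn
    exact ae_add_sub_mem_Icc hB hsuper hRBbdd ((hGc n).mono fun ω h => h.trans hn)
  · filter_upwards [ae_all_iff.mpr hGc] with ω hω
    have hGω : Tendsto (fun n => G n ω) atTop (𝓝 (RB ω)) := tendsto_iff_dist_tendsto_zero.2
      (squeeze_zero (fun _ => dist_nonneg) (fun n => (Real.dist_eq _ _).trans_le (hω n)) hc)
    exact (tendsto_const_nhds.add hGω).sub tendsto_const_nhds

/-- Let `U : ℝ → ℝ ∪ {-∞}` be increasing and concave, finite on `(0,∞)` and `-∞` on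
`(-∞,0)`.  Let `|B| ≤ b` a.s., fix `x > x₁` and `R^B` with `x₁ + R^B ≥ B` a.s. and
`|R^B| ≤ m₀` a.s.  Then the functional `I(G) := E[U(x + G - B)]` on `L^∞(P)` is finite at
`R^B` and continuous at `R^B` in the `L^∞`-norm topology (sequential form). -/
theorem utility_functional_finite_and_continuous
    {Ω : Type*} [MeasurableSpace Ω] (P : Measure Ω) [IsProbabilityMeasure P]
    (U : ℝ → EReal) (hmono : Monotone U)
    (hconc : ∀ a b t : ℝ, 0 ≤ t → t ≤ 1 →
      (t : EReal) * U a + ((1 - t : ℝ) : EReal) * U b ≤ U (t * a + (1 - t) * b))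
    (hfin : ∀ z : ℝ, 0 < z → U z ≠ ⊥) (hTop : ∀ z : ℝ, U z ≠ ⊤)
    (hbot : ∀ z : ℝ, z < 0 → U z = ⊥)
    (B : Ω → ℝ) (hBmeas : Measurable B) (b : ℝ) (hB : ∀ᵐ ω ∂P, |B ω| ≤ b)
    (x₁ x : ℝ) (hx : x₁ < x)
    (RB : Ω → ℝ) (hRBmeas : Measurable RB)
    (hsuper : ∀ᵐ ω ∂P, B ω ≤ x₁ + RB ω)
    (m₀ : ℝ) (hRBbdd : ∀ᵐ ω ∂P, |RB ω| ≤ m₀) :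
    (eExp P (fun ω => U (x + RB ω - B ω)) ≠ ⊥ ∧
     eExp P (fun ω => U (x + RB ω - B ω)) ≠ ⊤) ∧
    (∀ (G : ℕ → Ω → ℝ) (c : ℕ → ℝ), (∀ n, Measurable (G n)) →
      (∀ n, ∀ᵐ ω ∂P, |G n ω - RB ω| ≤ c n) →
      Filter.Tendsto c Filter.atTop (nhds 0) →
      Filter.Tendsto (fun n => eExp P (fun ω => U (x + G n ω - B ω)))
        Filter.atTop (nhds (eExp P (fun ω => U (x + RB ω - B ω))))) :=
  utility_functional_finite_and_continuous_general P U hmono hconc hfin hTop B hBmeas b hB x₁ x hx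
    RB hRBmeas hsuper m₀ hRBbdd
end

section
/- Let u and w be functions with u(x) = w(x) for all x in some interval, and suppose X*, B are random variables and ν* ∈ ba₊(P) with decomposition ν* = ν*_c + ν*_f satisfy: X* - B ≥ 0 a.s., E[U(X* - B)] = u(x), ψ_{ν*}(X* - x) ≤ 0, and w(x) = E[Ũ(dν*_c/dP)] - ψ_{ν*}(B) + x ν*(Ω), where U(z) ≤ Ũ(y) + zy pointwise for the conjugate pair (U, Ũ). Then ψ_{ν*_f}(X* - B) = 0. -/
open MeasureTheory

/-- Expectation of a real random variable, as an extended real. -/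
noncomputable def eExpR {Ω : Type*} [MeasurableSpace Ω] (P : Measure Ω) (g : Ω → ℝ) : EReal :=
  ((∫⁻ ω, ENNReal.ofReal (g ω) ∂P : ENNReal) : EReal) -
    ((∫⁻ ω, ENNReal.ofReal (-(g ω)) ∂P : ENNReal) : EReal)

/-!
Integrating Fenchel's inequality `U(X* - B) ≤ Ũ(h) + h (X* - B)`, where `h = dν*_c/dP`, gives
`u(x) ≤ E[Ũ(h)] + E[h (X* - B)]`. Splitting the budget constraint along
`X* - x = (X* - B) + (B - x)` gives
`E[h (X* - B)] + ψf(X* - B) ≤ x ν*(Ω) - ψ_{ν*}(B)`, so `u(x) + ψf(X* - B) ≤ w(x) = u(x)`,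
while `ψf(X* - B) ≥ 0` by positivity. Finiteness of `w(x)` makes each of its terms finite;
in particular `ψf` has a finite value, so, being additive, it is real-valued, and being
positive it is linear on constants: `ψf(x) = x ψf(1)`.
-/

namespace EReal

lemma exists_coe_of_add_eq_coe {a b : EReal} {r : ℝ} (h : a + b = r) :
    (∃ s : ℝ, a = s) ∧ ∃ t : ℝ, b = t := by
  induction a <;> induction b <;> simp_all [← coe_add]

lemma exists_coe_of_sub_eq_coe {a b : EReal} {r : ℝ} (h : a - b = r) :
    (∃ s : ℝ, a = s) ∧ ∃ t : ℝ, b = t := by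
  induction a <;> induction b <;> simp_all [← coe_sub]

lemma ne_bot_and_ne_top_of_add_eq_zero {a b : EReal} (h : a + b = 0) : a ≠ ⊥ ∧ a ≠ ⊤ := by
  induction a <;> induction b <;> simp_all

lemma exists_addMonoidHom_of_map_add {M : Type*} [AddGroup M] (ψ : M → EReal)
    (hψ : ∀ a b, ψ (a + b) = ψ a + ψ b) {a₀ : M} {r₀ : ℝ} (h₀ : ψ a₀ = r₀) :
    ∃ φ : M →+ ℝ, ∀ a, ψ a = φ a := by
  have hzero : ψ 0 = 0 := by
    have h := hψ a₀ 0
    rw [add_zero, h₀] at h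
    generalize ψ 0 = z at h ⊢
    induction z with
    | bot | top => simp at h
    | coe s => norm_cast at h ⊢; linarith
  have hfin : ∀ a, ψ a ≠ ⊥ ∧ ψ a ≠ ⊤ := fun a =>
    ne_bot_and_ne_top_of_add_eq_zero (by rw [← hψ, add_neg_cancel, hzero])
  refine ⟨AddMonoidHom.mk' (fun a => (ψ a).toReal) fun a b => ?_,
    fun a => (coe_toReal (hfin a).2 (hfin a).1).symm⟩
  simp only [hψ]
  exact toReal_add (hfin a).2 (hfin a).1 (hfin b).2 (hfin b).1

lemma posPart'_eq_toENNReal (a : EReal) : a.posPart' = a.toENNReal := rfl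

lemma toENNReal_eq_zero_of_lt_neg {f g : EReal} {c : ℝ} (hgf : g ≤ f + c)
    (hlt : ENNReal.ofReal c < (-f).toENNReal) : g.toENNReal = 0 := by
  induction f with
  | bot => simp_all
  | top => simp at hlt
  | coe r =>
    rw [← coe_neg, real_coe_toENNReal, ENNReal.ofReal_lt_ofReal_iff'] at hlt
    exact toENNReal_of_nonpos (hgf.trans (by exact_mod_cast (by linarith : r + c ≤ 0)))

lemma toENNReal_neg_le_add {f g : EReal} {c : ℝ} (hgf : g ≤ f + c) :
    (-f).toENNReal ≤ (-g).toENNReal + ENNReal.ofReal c := by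
  have : -f ≤ -g + c := by
    induction f <;> induction g <;> simp_all [← coe_neg, ← coe_add]
    all_goals linarith
  exact (toENNReal_le_toENNReal this).trans (toENNReal_add_le.trans_eq (by simp))

lemma toENNReal_add_le_add {f g : EReal} {c : ℝ} {q : ENNReal} (hc : 0 ≤ c) (hgf : g ≤ f + c)
    (hqf : q ≤ (-f).toENNReal) (hqc : q ≤ ENNReal.ofReal c) :
    g.toENNReal + q ≤ f.toENNReal + ENNReal.ofReal c := by
  induction f with
  | bot => simp_all
  | top => simp
  | coe r =>
    have hg : g.toENNReal ≤ ENNReal.ofReal (r + c) := by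
      simpa [← coe_add] using toENNReal_le_toENNReal hgf
    rw [← coe_neg, real_coe_toENNReal] at hqf
    rw [real_coe_toENNReal]
    rcases le_total 0 r with hr | hr
    · rw [ENNReal.ofReal_of_nonpos (by linarith : -r ≤ 0), nonpos_iff_eq_zero] at hqf
      rw [hqf, add_zero, ← ENNReal.ofReal_add hr hc]
      exact hg
    · rw [ENNReal.ofReal_of_nonpos hr, zero_add]
      rcases le_total (r + c) 0 with hrc | hrc
      · rw [ENNReal.ofReal_of_nonpos hrc, nonpos_iff_eq_zero] at hg
        rwa [hg, zero_add]
      · calc g.toENNReal + q ≤ ENNReal.ofReal (r + c) + ENNReal.ofReal (-r) := add_le_add hg hqf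
          _ = ENNReal.ofReal c := by
            rw [← ENNReal.ofReal_add hrc (by linarith)]
            ring_nf

lemma coe_ennreal_sub_le_of_add_le {p n a m C : ENNReal} (ha : a ≠ ⊤) (hm : m ≠ ⊤)
    (hC : C ≠ ⊤) (h : p + m ≤ a + n + C) : (p : EReal) - n ≤ (a : EReal) - m + C := by
  by_cases hn : n = ⊤
  · simp [hn]
  have hp : p ≠ ⊤ := ne_top_of_le_ne_top (by finiteness) (le_of_add_le_left h)
  lift p to NNReal using hp
  lift n to NNReal using hn
  lift a to NNReal using ha
  lift m to NNReal using hm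
  lift C to NNReal using hC
  have h' : (p : ℝ) + m ≤ a + n + C := by exact_mod_cast h
  simp only [EReal.coe_nnreal_eq_coe_real, ← EReal.coe_sub, ← EReal.coe_add, EReal.coe_le_coe_iff]
  linarith

end EReal

lemma AddMonoidHom.map_real_eq_mul_of_monotone (φ : ℝ →+ ℝ) (hφ : Monotone φ) (x : ℝ) :
    φ x = x * φ 1 := by
  have hrat : ∀ q : ℚ, φ q = q * φ 1 := fun q => by
    simpa using map_ratCast_smul φ ℝ ℝ q 1
  have h1 : 0 ≤ φ 1 := by simpa using hφ zero_le_one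
  have upper : ∀ y, φ y ≤ y * φ 1 := by
    intro y
    refine le_of_forall_pos_le_add fun ε hε => ?_
    have hδ : 0 < ε / (φ 1 + 1) := by positivity
    obtain ⟨q, hyq, hqy⟩ := exists_rat_btwn (lt_add_of_pos_right y hδ)
    calc φ y ≤ φ q := hφ hyq.le
      _ = q * φ 1 := hrat q
      _ ≤ (y + ε / (φ 1 + 1)) * φ 1 := by gcongr
      _ ≤ y * φ 1 + ε := by
        rw [add_mul, div_mul_eq_mul_div]
        gcongr
        rw [div_le_iff₀ (by positivity)]
        nlinarith
  linarith [upper x, upper (-x), map_neg φ x]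

lemma AddMonoidHom.map_const_eq_mul_of_monotone {α : Type*} (φ : (α → ℝ) →+ ℝ)
    (hφ : Monotone φ) (x : ℝ) :
    φ (fun _ => x) = x * φ (fun _ => 1) :=
  (φ.comp (Pi.constAddMonoidHom α ℝ)).map_real_eq_mul_of_monotone
    (hφ.comp fun _ _ h _ => h) x

open EReal

section Expectation

variable {Ω : Type*} [MeasurableSpace Ω] {P : Measure Ω}

lemma lintegral_toENNReal_add_le {f g : Ω → EReal} {c : Ω → ℝ} (hc : Measurable c)
    (hle : ∀ᵐ ω ∂P, 0 ≤ c ω ∧ g ω ≤ f ω + c ω) :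
    ∫⁻ ω, (g ω).toENNReal ∂P + ∫⁻ ω, (-f ω).toENNReal ∂P ≤
      ∫⁻ ω, (f ω).toENNReal ∂P + ∫⁻ ω, (-g ω).toENNReal ∂P + ∫⁻ ω, ENNReal.ofReal (c ω) ∂P := by
  classical
  -- The integrands need not be measurable, so `∫⁻` is only superadditive on them: pass to
  -- measurable minorants `φ, ψ` with the same integrals and split along `G = {c < ψ}`.
  -- On `G`, `f < -c` forces `g⁺ = 0`; off `G`, `ψ ≤ c` keeps `φ + ψ` below `f⁺ + c`.
  obtain ⟨φ, hφm, hφ, hφeq⟩ := exists_measurable_le_lintegral_eq P fun ω => (g ω).toENNReal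
  obtain ⟨ψ, hψm, hψ, hψeq⟩ := exists_measurable_le_lintegral_eq P fun ω => (-f ω).toENNReal
  set C := fun ω => ENNReal.ofReal (c ω)
  set G := {ω | C ω < ψ ω}
  have hG : MeasurableSet G := measurableSet_lt hc.ennreal_ofReal hψm
  have hpt : ∀ᵐ ω ∂P, φ ω + ψ ω ≤
      G.piecewise (fun ω => (-g ω).toENNReal + C ω) (fun ω => (f ω).toENNReal + C ω) ω := by
    filter_upwards [hle] with ω ⟨hc0, hgf⟩
    by_cases hω : ω ∈ G
    · have hφ0 : φ ω = 0 := nonpos_iff_eq_zero.1 <|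
        (hφ ω).trans (toENNReal_eq_zero_of_lt_neg hgf (hω.trans_le (hψ ω))).le
      rw [Set.piecewise_eq_of_mem _ _ _ hω, hφ0, zero_add]
      exact (hψ ω).trans (toENNReal_neg_le_add hgf)
    · rw [Set.piecewise_eq_of_notMem _ _ _ hω]
      exact (add_le_add (hφ ω) le_rfl).trans
        (toENNReal_add_le_add hc0 hgf (hψ ω) (not_lt.1 hω))
  calc ∫⁻ ω, (g ω).toENNReal ∂P + ∫⁻ ω, (-f ω).toENNReal ∂P = ∫⁻ ω, (φ ω + ψ ω) ∂P := by
        rw [hφeq, hψeq, lintegral_add_left hφm]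
    _ ≤ ∫⁻ ω, G.piecewise (fun ω => (-g ω).toENNReal + C ω)
          (fun ω => (f ω).toENNReal + C ω) ω ∂P := lintegral_mono_ae hpt
    _ = (∫⁻ ω in Gᶜ, (f ω).toENNReal ∂P + ∫⁻ ω in G, (-g ω).toENNReal ∂P) +
          (∫⁻ ω in G, C ω ∂P + ∫⁻ ω in Gᶜ, C ω ∂P) := by
        rw [lintegral_piecewise hG, lintegral_add_right _ hc.ennreal_ofReal,
          lintegral_add_right _ hc.ennreal_ofReal]
        ring
    _ ≤ _ := by
        rw [lintegral_add_compl _ hG]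
        gcongr <;> exact Measure.restrict_le_self

lemma eExp_le_of_le_add {f g : Ω → EReal} {c : Ω → ℝ} {t : ℝ} (hf : eExp P f = t)
    (hcm : Measurable c) (hc : Integrable c P) (hle : ∀ᵐ ω ∂P, 0 ≤ c ω ∧ g ω ≤ f ω + c ω) :
    eExp P g ≤ ((t + ∫ ω, c ω ∂P : ℝ) : EReal) := by
  have hc0 : 0 ≤ᵐ[P] c := hle.mono fun _ h => h.1
  have hC : ∫⁻ ω, ENNReal.ofReal (c ω) ∂P = ENNReal.ofReal (∫ ω, c ω ∂P) :=
    (ofReal_integral_eq_lintegral_ofReal hc hc0).symm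
  unfold eExp at hf ⊢
  simp only [posPart'_eq_toENNReal] at hf ⊢
  obtain ⟨⟨a, ha⟩, ⟨m, hm⟩⟩ := exists_coe_of_sub_eq_coe hf
  calc _ ≤ ((∫⁻ ω, (f ω).toENNReal ∂P : ENNReal) : EReal) - (∫⁻ ω, (-f ω).toENNReal ∂P : ENNReal)
        + (∫⁻ ω, ENNReal.ofReal (c ω) ∂P : ENNReal) :=
      coe_ennreal_sub_le_of_add_le (fun h => by simp [h] at ha) (fun h => by simp [h] at hm)
        (hC ▸ ENNReal.ofReal_ne_top) (lintegral_toENNReal_add_le hcm hle)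
    _ = _ := by
      rw [hf, hC, coe_ennreal_ofReal, max_eq_left (integral_nonneg_of_ae hc0), coe_add]

lemma eExpR_eq_integral {g : Ω → ℝ} (hg : Integrable g P) : eExpR P g = ∫ ω, g ω ∂P := by
  have hneg : ∫⁻ ω, ENNReal.ofReal (-g ω) ∂P ≠ ⊤ := hg.neg.lintegral_lt_top.ne
  rw [eExpR, integral_eq_lintegral_pos_part_sub_lintegral_neg_part hg, coe_sub,
    coe_ennreal_toReal hg.lintegral_lt_top.ne, coe_ennreal_toReal hneg]

lemma integrable_of_eExpR_ne_top {g : Ω → ℝ} (hg : AEStronglyMeasurable g P)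
    (hneg : ∫⁻ ω, ENNReal.ofReal (-g ω) ∂P ≠ ⊤) (htop : eExpR P g ≠ ⊤) : Integrable g P := by
  have hpos : ∫⁻ ω, ENNReal.ofReal (g ω) ∂P ≠ ⊤ := fun h => htop <| by
    rw [eExpR, h, ← coe_ennreal_toReal hneg]
    exact top_sub_coe _
  have hpos' := integrable_toReal_of_lintegral_ne_top hg.aemeasurable.ennreal_ofReal hpos
  have hneg' := integrable_toReal_of_lintegral_ne_top hg.aemeasurable.neg.ennreal_ofReal hneg
  refine (hpos'.sub hneg').congr (ae_of_all _ fun ω => ?_)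
  simp [ENNReal.toReal_ofReal', max_zero_sub_max_neg_zero_eq_self]

lemma integrable_of_eExpR_eq_coe {g : Ω → ℝ} {r : ℝ} (hg : AEStronglyMeasurable g P)
    (hr : eExpR P g = r) : Integrable g P := by
  obtain ⟨-, ⟨m, hm⟩⟩ := exists_coe_of_sub_eq_coe hr
  exact integrable_of_eExpR_ne_top hg (fun h => by simp [h] at hm) (hr ▸ coe_ne_top r)

lemma integrable_of_eExpR_ne_top_of_le {g k : Ω → ℝ} (hg : AEStronglyMeasurable g P)
    (hk : Integrable k P) (hkg : k ≤ᵐ[P] g) (htop : eExpR P g ≠ ⊤) : Integrable g P := by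
  refine integrable_of_eExpR_ne_top hg (ne_top_of_le_ne_top hk.neg.lintegral_lt_top.ne ?_) htop
  exact lintegral_mono_ae (hkg.mono fun ω h => ENNReal.ofReal_le_ofReal (by simpa using h))

lemma integrable_and_le_of_budget {Xs B h : Ω → ℝ} {x : ℝ} (φ : (Ω → ℝ) →+ ℝ) (hφ : Monotone φ)
    (hXs : Measurable Xs) (hhmeas : Measurable h) (hh : ∀ ω, 0 ≤ h ω) (hhint : Integrable h P)
    (hhB : Integrable (fun ω => h ω * B ω) P) (hXB : ∀ᵐ ω ∂P, 0 ≤ Xs ω - B ω)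
    (hbudget : eExpR P (fun ω => h ω * (Xs ω - x)) + φ (fun ω => Xs ω - x) ≤ 0) :
    Integrable (fun ω => h ω * (Xs ω - B ω)) P ∧
      ∫ ω, h ω * (Xs ω - B ω) ∂P + φ (fun ω => Xs ω - B ω) ≤
        x * (∫ ω, h ω ∂P + φ (fun _ => 1)) - (∫ ω, h ω * B ω ∂P + φ B) := by
  have hk : Integrable (fun ω => h ω * B ω - x * h ω) P := hhB.sub (hhint.const_mul x)
  have hhXx : Integrable (fun ω => h ω * (Xs ω - x)) P := by
    refine integrable_of_eExpR_ne_top_of_le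
      (hhmeas.mul (hXs.sub measurable_const)).aestronglyMeasurable hk ?_ fun htop => ?_
    · filter_upwards [hXB] with ω hω
      nlinarith [hh ω]
    · rw [htop, top_add_coe] at hbudget
      exact absurd hbudget (by simp)
  have hhXB : Integrable (fun ω => h ω * (Xs ω - B ω)) P :=
    (hhXx.sub hk).congr (ae_of_all _ fun ω => by simp only [Pi.sub_apply]; ring)
  refine ⟨hhXB, ?_⟩
  have hint : ∫ ω, h ω * (Xs ω - x) ∂P =
      ∫ ω, h ω * (Xs ω - B ω) ∂P + (∫ ω, h ω * B ω ∂P - x * ∫ ω, h ω ∂P) := by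
    rw [← integral_const_mul, ← integral_sub hhB (hhint.const_mul x), ← integral_add hhXB hk]
    congr 1 with ω
    ring
  have hsplit : (fun ω => Xs ω - x) = (fun ω => Xs ω - B ω) + B - fun _ => x := by
    ext ω; simp
  rw [eExpR_eq_integral hhXx, ← coe_add, ← coe_zero, EReal.coe_le_coe_iff, hint, hsplit, map_sub,
    map_add, φ.map_const_eq_mul_of_monotone hφ] at hbudget
  linarith

end Expectation

/-- `ν* ∈ ba₊(P)` is represented by the density `h = dν*_c/dP` of its countably additive part
and by the integration functional `ψf = ψ_{ν*_f}` of its purely finitely additive part, so that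
`ψ_{ν*}(g) = E[h g] + ψf(g)` and `ν*(Ω) = E[h] + ψf(1)`. -/
theorem singular_part_vanishes_on_optimal_wealth_general
    {Ω : Type*} [MeasurableSpace Ω] (P : Measure Ω)
    (U tU : ℝ → EReal) (u w : ℝ → EReal) (x : ℝ)
    (Xs B h : Ω → ℝ) (hXs : Measurable Xs) (hBmeas : Measurable B) (hhmeas : Measurable h)
    (hh : ∀ ω, 0 ≤ h ω) (hhint : Integrable h P)
    (ψf : (Ω → ℝ) → EReal)
    (hψf_pos : ∀ g : Ω → ℝ, (∀ᵐ ω ∂P, 0 ≤ g ω) → 0 ≤ ψf g)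
    (hψf_add : ∀ g₁ g₂ : Ω → ℝ, ψf (g₁ + g₂) = ψf g₁ + ψf g₂)
    (hXB : ∀ᵐ ω ∂P, 0 ≤ Xs ω - B ω)
    (hFen : ∀ z y : ℝ, 0 ≤ z → 0 ≤ y → U z ≤ tU y + ((z * y : ℝ) : EReal))
    (hEU : eExp P (fun ω => U (Xs ω - B ω)) = u x)
    (hbudget : eExpR P (fun ω => h ω * (Xs ω - x)) + ψf (fun ω => Xs ω - x) ≤ 0)
    (hw : w x = eExp P (fun ω => tU (h ω)) -
        (eExpR P (fun ω => h ω * B ω) + ψf B) +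
        ((x : ℝ) : EReal) * (eExpR P h + ψf (fun _ => 1)))
    (huw : u x = w x)
    (hufin : u x ≠ ⊥ ∧ u x ≠ ⊤) :
    ψf (fun ω => Xs ω - B ω) = 0 := by
  obtain ⟨r, hur⟩ : ∃ r : ℝ, u x = r := ⟨(u x).toReal, (coe_toReal hufin.2 hufin.1).symm⟩
  have hr := hur
  rw [huw, hw] at hr
  obtain ⟨⟨q, hq⟩, -⟩ := exists_coe_of_add_eq_coe hr
  obtain ⟨⟨t, ht⟩, ⟨b, hb⟩⟩ := exists_coe_of_sub_eq_coe hq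
  obtain ⟨⟨β, hβ⟩, ⟨ψB, hψB⟩⟩ := exists_coe_of_add_eq_coe hb
  obtain ⟨φ, hφ⟩ := exists_addMonoidHom_of_map_add ψf hψf_add hψB
  have hφ_nonneg : ∀ g : Ω → ℝ, 0 ≤ᵐ[P] g → 0 ≤ φ g := fun g hg => by
    exact_mod_cast hφ g ▸ hψf_pos g hg
  have hφ_mono : Monotone φ :=
    (monotone_iff_map_nonneg φ).2 fun g hg => hφ_nonneg g (ae_of_all _ hg)
  have hhB : Integrable (fun ω => h ω * B ω) P :=
    integrable_of_eExpR_eq_coe (hhmeas.mul hBmeas).aestronglyMeasurable hβ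
  obtain ⟨hhXB, hbud⟩ := integrable_and_le_of_budget φ hφ_mono hXs hhmeas hh hhint hhB hXB
    (hφ _ ▸ hbudget)
  have hu : u x ≤ ((t + ∫ ω, h ω * (Xs ω - B ω) ∂P : ℝ) : EReal) := by
    refine hEU ▸ eExp_le_of_le_add ht (hhmeas.mul (hXs.sub hBmeas)) hhXB ?_
    filter_upwards [hXB] with ω hω
    exact ⟨mul_nonneg (hh ω) hω, mul_comm (Xs ω - B ω) (h ω) ▸ hFen _ _ hω (hh ω)⟩
  have hβ_eq : β = ∫ ω, h ω * B ω ∂P := by exact_mod_cast hβ.symm.trans (eExpR_eq_integral hhB)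
  rw [ht, hβ, eExpR_eq_integral hhint] at hr
  simp only [hφ] at hr
  rw [hur] at hu
  norm_cast at hr hu
  rw [hφ, le_antisymm (by linarith) (hφ_nonneg _ hXB), coe_zero]

/-- Vanishing of the singular part on the optimal wealth.  Here `ν* ∈ ba₊(P)` is represented
by the density `h = dν*_c/dP` of its countably additive part and by the (positive, additive)
integration functional `ψf = ψ_{ν*_f}` of its purely finitely additive part, extended to
random variables bounded below; `ψ_{ν*}(g) = E[h g] + ψf(g)` and `ν*(Ω) = E[h] + ψf(1)`.
If `X* - B ≥ 0` a.s., `E[U(X* - B)] = u(x)`, `ψ_{ν*}(X* - x) ≤ 0`,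
`w(x) = E[Ũ(dν*_c/dP)] - ψ_{ν*}(B) + x ν*(Ω)`, the pointwise Fenchel inequality
`U(z) ≤ Ũ(y) + zy` holds, and `u(x) = w(x)`, then `ψ_{ν*_f}(X* - B) = 0`. -/
theorem singular_part_vanishes_on_optimal_wealth
    {Ω : Type*} [MeasurableSpace Ω] (P : Measure Ω) [IsProbabilityMeasure P]
    (U tU : ℝ → EReal) (u w : ℝ → EReal) (x : ℝ)
    (Xs B h : Ω → ℝ) (hXs : Measurable Xs) (hBmeas : Measurable B) (hhmeas : Measurable h)
    (hh : ∀ ω, 0 ≤ h ω) (hhint : Integrable h P)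
    (ψf : (Ω → ℝ) → EReal)
    (hψf_pos : ∀ g : Ω → ℝ, (∀ᵐ ω ∂P, 0 ≤ g ω) → 0 ≤ ψf g)
    (hψf_add : ∀ g₁ g₂ : Ω → ℝ, ψf (g₁ + g₂) = ψf g₁ + ψf g₂)
    (hXB : ∀ᵐ ω ∂P, 0 ≤ Xs ω - B ω)
    (hFen : ∀ z y : ℝ, 0 ≤ z → 0 ≤ y → U z ≤ tU y + ((z * y : ℝ) : EReal))
    (hEU : eExp P (fun ω => U (Xs ω - B ω)) = u x)
    (hbudget : eExpR P (fun ω => h ω * (Xs ω - x)) + ψf (fun ω => Xs ω - x) ≤ 0)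
    (hw : w x = eExp P (fun ω => tU (h ω)) -
        (eExpR P (fun ω => h ω * B ω) + ψf B) +
        ((x : ℝ) : EReal) * (eExpR P h + ψf (fun _ => 1)))
    (huw : u x = w x)
    (hufin : u x ≠ ⊥ ∧ u x ≠ ⊤) :
    ψf (fun ω => Xs ω - B ω) = 0 :=
  singular_part_vanishes_on_optimal_wealth_general P U tU u w x Xs B h hXs hBmeas hhmeas hh hhint ψf
    hψf_pos hψf_add hXB hFen hEU hbudget hw huw hufin
end
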